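/- Let G be a disconnected graph with exactly one nontrivial connected component G_1 and t > 0 trivial components. If diam(G_1) ≤ 3, then h(G\bar{G}) ≤ h(G_1) + t, where h denotes the geodetic hull number. -/

import Mathlib

open SimpleGraph

/-- The geodetic closed interval `I[u,v]`: `u`, `v`, and all vertices lying on
some shortest `u`–`v` path. -/
def geoInterval {V : Type*} (G : SimpleGraph V) (u v : V) : Set V :=
  {w | w = u ∨ w = v ∨ (G.Reachable u v ∧ G.dist u w + G.dist w v = G.dist u v)}

/-- A set is geodetically convex if it is closed under intervals. -/
def IsGeoConvex {V : Type*} (G : SimpleGraph V) (S : Set V) : Prop :=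
  ∀ u ∈ S, ∀ v ∈ S, geoInterval G u v ⊆ S

/-- The geodetic convex hull: the smallest convex set containing `S`. -/
def geoHull {V : Type*} (G : SimpleGraph V) (S : Set V) : Set V :=
  ⋂₀ {T | IsGeoConvex G T ∧ S ⊆ T}

/-- `S` is a hull set if its convex hull is the whole vertex set. -/
def IsHullSet {V : Type*} (G : SimpleGraph V) (S : Set V) : Prop :=
  geoHull G S = Set.univ

/-- The geodetic hull number: minimum cardinality of a hull set. -/
noncomputable def hullNumber {V : Type*} (G : SimpleGraph V) : ℕ :=
  sInf {n | ∃ S : Set V, S.ncard = n ∧ IsHullSet G S}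

/-- A vertex is simplicial if its closed neighborhood induces a clique. -/
def IsSimplicial {V : Type*} (G : SimpleGraph V) (v : V) : Prop :=
  ∀ a ∈ G.neighborSet v, ∀ b ∈ G.neighborSet v, a ≠ b → G.Adj a b

/-- The complementary prism `G G̅`: disjoint union of `G` (left copies) and its
complement (right copies), plus a perfect matching between corresponding vertices. -/
def compPrism {V : Type*} (G : SimpleGraph V) : SimpleGraph (V ⊕ V) where
  Adj x y :=
    match x, y with
    | .inl u, .inl w => G.Adj u w
    | .inr u, .inr w => u ≠ w ∧ ¬ G.Adj u w
    | .inl u, .inr w => u = w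
    | .inr u, .inl w => u = w
  symm := by
    refine ⟨?_⟩
    rintro (u | u) (w | w) h
    · exact h.symm
    · exact h.symm
    · exact h.symm
    · exact ⟨h.1.symm, fun a => h.2 a.symm⟩
  loopless := by
    refine ⟨?_⟩
    rintro (u | u) h
    · exact G.irrefl h
    · exact h.1 rfl

/-
Take a minimum hull set `S` of the nontrivial component `G₁` and add all isolated vertices
`Z`. Within the `G`-side of the prism, leaving `G` costs at least three steps, so distances of
`G₁` up to `3` are preserved and the hull of `S` contains the whole `G`-copy of `G₁`. For
`z ∈ Z` and `u ∈ G₁`, the walk `z, z̄, ū, u` is a geodesic of length `3`, so `z̄` and `ū` enter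
the hull too.
-/

section Geodetic

variable {V W : Type*} {G : SimpleGraph V}

lemma subset_geoHull (S : Set V) : S ⊆ geoHull G S :=
  fun _ hx _ hT => hT.2 hx

lemma geoHull_subset {S T : Set V} (hT : IsGeoConvex G T) (hST : S ⊆ T) : geoHull G S ⊆ T :=
  Set.sInter_subset_of_mem ⟨hT, hST⟩

lemma isGeoConvex_geoHull (S : Set V) : IsGeoConvex G (geoHull G S) :=
  fun _ hu _ hv _ hw _ hT => hT.1 _ (hu _ hT) _ (hv _ hT) hw

lemma geoHull_mono {S T : Set V} (hST : S ⊆ T) : geoHull G S ⊆ geoHull G T :=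
  geoHull_subset (isGeoConvex_geoHull T) (hST.trans (subset_geoHull T))

lemma isHullSet_univ : IsHullSet G Set.univ :=
  Set.univ_subset_iff.mp (subset_geoHull _)

lemma hullNumber_le_ncard {S : Set V} (hS : IsHullSet G S) : hullNumber G ≤ S.ncard :=
  Nat.sInf_le ⟨S, rfl, hS⟩

lemma exists_isHullSet_ncard_eq_hullNumber :
    ∃ S : Set V, S.ncard = hullNumber G ∧ IsHullSet G S :=
  Nat.sInf_mem (s := {n | ∃ S : Set V, S.ncard = n ∧ IsHullSet G S})
    ⟨_, Set.univ, rfl, isHullSet_univ⟩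

lemma SimpleGraph.Walk.mem_geoInterval_of_mem_support {u v w : V} (p : G.Walk u v)
    (hp : p.length = G.dist u v) (hw : w ∈ p.support) : w ∈ geoInterval G u v := by
  classical
  refine Or.inr (Or.inr ⟨p.reachable, le_antisymm ?_
    ((p.takeUntil w hw).reachable.dist_triangle_left v)⟩)
  calc G.dist u w + G.dist w v
      ≤ (p.takeUntil w hw).length + (p.dropUntil w hw).length :=
        add_le_add (dist_le _) (dist_le _)
    _ = G.dist u v := by rw [← Walk.length_append, Walk.take_spec, hp]

lemma IsGeoConvex.preimage {H : SimpleGraph W} {f : V → W}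
    (hf : ∀ u v, H.dist (f u) (f v) = G.dist u v) {T : Set W} (hT : IsGeoConvex H T) :
    IsGeoConvex G (f ⁻¹' T) := by
  rintro u hu v hv w (rfl | rfl | ⟨huv, hsum⟩)
  · exact hu
  · exact hv
  · have hreach : H.Reachable (f u) (f v) := by
      by_cases h : u = v
      · exact h ▸ Reachable.refl _
      · have : G.dist u v ≠ 0 := dist_ne_zero_iff_ne_and_reachable.mpr ⟨h, huv⟩
        exact Reachable.of_dist_ne_zero (hf u v ▸ this)
    exact hT _ hu _ hv (Or.inr (Or.inr ⟨hreach, by rw [hf, hf, hf, hsum]⟩))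

lemma image_geoHull_subset {H : SimpleGraph W} {f : V → W}
    (hf : ∀ u v, H.dist (f u) (f v) = G.dist u v) (S : Set V) :
    f '' geoHull G S ⊆ geoHull H (f '' S) :=
  Set.image_subset_iff.mpr <| geoHull_subset ((isGeoConvex_geoHull _).preimage hf)
    (Set.image_subset_iff.mp (subset_geoHull _))

end Geodetic

namespace SimpleGraph

variable {V : Type*} {G : SimpleGraph V}

lemma Walk.le_add_length {f : V → ℕ} (hf : ∀ x y, G.Adj x y → f x ≤ f y + 1) {u v : V}
    (p : G.Walk u v) : f u ≤ f v + p.length := by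
  induction p with
  | nil => simp
  | cons h _ ih =>
    have := hf _ _ h
    rw [Walk.length_cons]
    omega

lemma Reachable.le_add_dist {f : V → ℕ} (hf : ∀ x y, G.Adj x y → f x ≤ f y + 1) {u v : V}
    (h : G.Reachable u v) : f u ≤ f v + G.dist u v := by
  obtain ⟨p, hp⟩ := h.exists_walk_length_eq_dist
  exact hp ▸ p.le_add_length hf

namespace ConnectedComponent

lemma mem_supp_of_mem_support {C : G.ConnectedComponent} {u v w : V} (p : G.Walk u v)
    (hu : u ∈ C.supp) (hw : w ∈ p.support) : w ∈ C.supp := by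
  classical
  rw [mem_supp_iff] at hu ⊢
  exact (ConnectedComponent.sound (p.takeUntil w hw).reachable).symm.trans hu

lemma not_reachable_of_notMem_supp {C : G.ConnectedComponent} {u v : V} (hu : u ∉ C.supp)
    (hv : v ∈ C.supp) : ¬ G.Reachable u v := by
  intro h
  rw [mem_supp_iff] at hu hv
  exact hu ((ConnectedComponent.sound h).trans hv)

lemma dist_induce_supp (C : G.ConnectedComponent) (u v : C.supp) :
    (G.induce C.supp).dist u v = G.dist u v := by
  refine le_antisymm ?_ ?_
  · obtain ⟨p, hp⟩ := (C.reachable_of_mem_supp u.2 v.2).exists_walk_length_eq_dist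
    let q := p.induce C.supp fun _ hw => mem_supp_of_mem_support p u.2 hw
    have hq : q.length = p.length := by
      rw [← Walk.length_map (Embedding.induce C.supp).toHom, Walk.map_induce]
      rfl
    exact (dist_le q).trans_eq (hq.trans hp)
  · obtain ⟨q, hq⟩ := (C.reachable_toSimpleGraph u.2 v.2).exists_walk_length_eq_dist
    exact (dist_le (q.map (Embedding.induce C.supp).toHom)).trans_eq
      ((Walk.length_map _ _).trans hq)

lemma ncard_compl_supp_eq_card_trivial {C₁ : G.ConnectedComponent} (hC₁ : C₁.supp.Nontrivial)
    (huniq : ∀ C : G.ConnectedComponent, C.supp.Nontrivial → C = C₁) :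
    C₁.suppᶜ.ncard = Nat.card {C : G.ConnectedComponent // ¬ C.supp.Nontrivial} := by
  rw [← Nat.card_coe_set_eq]
  refine Nat.card_congr <| Equiv.ofBijective
    (fun w => ⟨G.connectedComponentMk w, fun h => w.2 ((mem_supp_iff _ _).mpr (huniq _ h))⟩)
    ⟨?_, ?_⟩
  · rintro ⟨z, hz⟩ ⟨z', _⟩ h
    have htriv : ¬ (G.connectedComponentMk z).supp.Nontrivial := fun hnt =>
      hz ((mem_supp_iff _ _).mpr (huniq _ hnt))
    have hz' : z' ∈ (G.connectedComponentMk z).supp := (congrArg Subtype.val h).symm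
    exact Subtype.ext (Set.not_nontrivial_iff.mp htriv rfl hz')
  · rintro ⟨C, hC⟩
    obtain ⟨z, hzC⟩ := C.exists_rep
    have hz : z ∉ C₁.supp := fun hz => hC (((mem_supp_iff _ _).mp hz).symm.trans hzC ▸ hC₁)
    exact ⟨⟨z, hz⟩, Subtype.ext hzC⟩

end ConnectedComponent

end SimpleGraph

section CompPrism

variable {V : Type*} {G : SimpleGraph V}

@[simps]
def compPrismInl (G : SimpleGraph V) : G →g compPrism G where
  toFun := Sum.inl
  map_rel' h := h

/- Returning to the `G`-side after leaving it costs two matching edges and an edge of the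
complement, so `G`-distances are preserved in `compPrism G` up to `3`. -/
open Classical in
noncomputable def compPrismDistLowerBound (G : SimpleGraph V) (v : V) : V ⊕ V → ℕ
  | .inl w => if G.Reachable w v then min (G.dist w v) 3 else 3
  | .inr w => if w = v then 1 else 2

lemma compPrismDistLowerBound_le_add_one_of_adj {v : V} {x y : V ⊕ V}
    (h : (compPrism G).Adj x y) :
    compPrismDistLowerBound G v x ≤ compPrismDistLowerBound G v y + 1 := by
  rcases x with w | w <;> rcases y with w' | w'
  · have hadj : G.Adj w w' := h
    have hreach : G.Reachable w v ↔ G.Reachable w' v :=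
      ⟨hadj.symm.reachable.trans, hadj.reachable.trans⟩
    have htri : G.dist w v ≤ G.dist w' v + 1 := by
      have := hadj.reachable.dist_triangle_left v
      rwa [dist_eq_one_iff_adj.mpr hadj, add_comm] at this
    by_cases hr : G.Reachable w' v
    · simp only [compPrismDistLowerBound, if_pos hr, if_pos (hreach.mpr hr)]
      omega
    · simp [compPrismDistLowerBound, hr, mt hreach.mp hr]
  · obtain rfl : w = w' := h
    by_cases hv : w = v
    · subst hv
      simp [compPrismDistLowerBound]
    · simp only [compPrismDistLowerBound, if_neg hv]
      split_ifs <;> omega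
  · obtain rfl : w = w' := h
    by_cases hv : w = v
    · simp [compPrismDistLowerBound, hv]
    · simp only [compPrismDistLowerBound, if_neg hv]
      split_ifs with hr
      · have := hr.pos_dist_of_ne hv
        omega
      · omega
  · simp only [compPrismDistLowerBound]
    split_ifs <;> omega

lemma compPrismDistLowerBound_le_dist {v : V} {x : V ⊕ V}
    (h : (compPrism G).Reachable x (.inl v)) :
    compPrismDistLowerBound G v x ≤ (compPrism G).dist x (.inl v) := by
  simpa [compPrismDistLowerBound] using h.le_add_dist (f := compPrismDistLowerBound G v)
    fun _ _ => compPrismDistLowerBound_le_add_one_of_adj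

lemma compPrism_dist_inl_inl {u v : V} (h : G.Reachable u v) (h3 : G.dist u v ≤ 3) :
    (compPrism G).dist (.inl u) (.inl v) = G.dist u v := by
  obtain ⟨p, hp⟩ := h.exists_walk_length_eq_dist
  refine le_antisymm ((dist_le (p.map (compPrismInl G))).trans_eq (by rw [Walk.length_map, hp])) ?_
  simpa [compPrismDistLowerBound, h, h3] using
    compPrismDistLowerBound_le_dist (v := v) (h.map (compPrismInl G))

lemma inr_mem_geoInterval_compPrism {u v : V} (h : ¬ G.Reachable u v) :
    Sum.inr u ∈ geoInterval (compPrism G) (.inl u) (.inl v) ∧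
      Sum.inr v ∈ geoInterval (compPrism G) (.inl u) (.inl v) := by
  have hne : u ≠ v := fun huv => h (huv ▸ Reachable.refl u)
  have e₁ : (compPrism G).Adj (.inl u) (.inr u) := rfl
  have e₂ : (compPrism G).Adj (.inr u) (.inr v) := ⟨hne, fun hadj => h hadj.reachable⟩
  have e₃ : (compPrism G).Adj (.inr v) (.inl v) := rfl
  let p : (compPrism G).Walk (.inl u) (.inl v) := .cons e₁ (.cons e₂ (.cons e₃ .nil))
  have hp : p.length = (compPrism G).dist (.inl u) (.inl v) := by
    refine le_antisymm ?_ (dist_le p)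
    rw [show p.length = 3 from rfl]
    simpa [compPrismDistLowerBound, h] using compPrismDistLowerBound_le_dist (v := v) p.reachable
  exact ⟨p.mem_geoInterval_of_mem_support hp (by simp [p]),
    p.mem_geoInterval_of_mem_support hp (by simp [p])⟩

end CompPrism

theorem isHullSet_compPrism_of_isHullSet_induce {V : Type*} {G : SimpleGraph V}
    {C : G.ConnectedComponent} (hdiam : ∀ u ∈ C.supp, ∀ v ∈ C.supp, G.dist u v ≤ 3)
    (hout : C.suppᶜ.Nonempty) {S : Set C.supp} (hS : IsHullSet (G.induce C.supp) S) :
    IsHullSet (compPrism G) (Sum.inl '' (Subtype.val '' S ∪ C.suppᶜ)) := by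
  set M := geoHull (compPrism G) (Sum.inl '' (Subtype.val '' S ∪ C.suppᶜ))
  have hM : IsGeoConvex (compPrism G) M := isGeoConvex_geoHull _
  have hinl_in : ∀ u ∈ C.supp, Sum.inl u ∈ M := by
    have hdist (a b : C.supp) :
        (compPrism G).dist (.inl a.1) (.inl b.1) = (G.induce C.supp).dist a b := by
      rw [compPrism_dist_inl_inl (C.reachable_of_mem_supp a.2 b.2) (hdiam _ a.2 _ b.2),
        C.dist_induce_supp]
    have hsub := image_geoHull_subset hdist S
    rw [hS, Set.image_univ] at hsub
    intro u hu
    refine geoHull_mono ?_ (hsub ⟨⟨u, hu⟩, rfl⟩)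
    rintro _ ⟨a, ha, rfl⟩
    exact ⟨a, Or.inl ⟨a, ha, rfl⟩, rfl⟩
  have hinl_out : ∀ z ∉ C.supp, Sum.inl z ∈ M :=
    fun z hz => subset_geoHull _ ⟨z, Or.inr hz, rfl⟩
  have hinr : ∀ z ∉ C.supp, ∀ u ∈ C.supp, Sum.inr z ∈ M ∧ Sum.inr u ∈ M := by
    intro z hz u hu
    obtain ⟨hzI, huI⟩ := inr_mem_geoInterval_compPrism (C.not_reachable_of_notMem_supp hz hu)
    exact ⟨hM _ (hinl_out z hz) _ (hinl_in u hu) hzI, hM _ (hinl_out z hz) _ (hinl_in u hu) huI⟩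
  obtain ⟨z₀, hz₀⟩ := hout
  obtain ⟨u₀, hu₀⟩ := C.nonempty_supp
  refine Set.eq_univ_of_forall fun x => ?_
  rcases x with w | w <;> by_cases hw : w ∈ C.supp
  · exact hinl_in w hw
  · exact hinl_out w hw
  · exact (hinr z₀ hz₀ w hw).2
  · exact (hinr w hw u₀ hu₀).1

theorem hullNumber_compPrism_one_nontrivial_ub_diam_le_three_general {V : Type*}
    (G : SimpleGraph V) (t : ℕ)
    (C₁ : G.ConnectedComponent) (hC₁ : C₁.supp.Nontrivial)
    (huniq : ∀ C : G.ConnectedComponent, C.supp.Nontrivial → C = C₁)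
    (ht : t = Nat.card {C : G.ConnectedComponent // ¬ C.supp.Nontrivial})
    (ht0 : 0 < t)
    (hdiam : ∀ u v : C₁.supp, (G.induce C₁.supp).dist u v ≤ 3) :
    hullNumber (compPrism G) ≤ hullNumber (G.induce C₁.supp) + t := by
  obtain ⟨S, hScard, hS⟩ := exists_isHullSet_ncard_eq_hullNumber (G := G.induce C₁.supp)
  have hcompl : C₁.suppᶜ.ncard = t := ht ▸ C₁.ncard_compl_supp_eq_card_trivial hC₁ huniq
  have hout : C₁.suppᶜ.Nonempty := Set.nonempty_of_ncard_ne_zero (by omega)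
  have hdiamG : ∀ u ∈ C₁.supp, ∀ v ∈ C₁.supp, G.dist u v ≤ 3 := fun u hu v hv =>
    C₁.dist_induce_supp ⟨u, hu⟩ ⟨v, hv⟩ ▸ hdiam ⟨u, hu⟩ ⟨v, hv⟩
  calc hullNumber (compPrism G)
      ≤ (Sum.inl '' (Subtype.val '' S ∪ C₁.suppᶜ)).ncard :=
        hullNumber_le_ncard (isHullSet_compPrism_of_isHullSet_induce hdiamG hout hS)
    _ ≤ (Subtype.val '' S).ncard + C₁.suppᶜ.ncard := by
        rw [Set.ncard_image_of_injective _ Sum.inl_injective]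
        exact Set.ncard_union_le _ _
    _ = hullNumber (G.induce C₁.supp) + t := by
        rw [Set.ncard_image_of_injective _ Subtype.val_injective, hScard, hcompl]

theorem hullNumber_compPrism_one_nontrivial_ub_diam_le_three {V : Type*} [Fintype V]
    (G : SimpleGraph V) (t : ℕ) (hdisc : ¬ G.Connected)
    (C₁ : G.ConnectedComponent) (hC₁ : C₁.supp.Nontrivial)
    (huniq : ∀ C : G.ConnectedComponent, C.supp.Nontrivial → C = C₁)
    (ht : t = Nat.card {C : G.ConnectedComponent // ¬ C.supp.Nontrivial})
    (ht0 : 0 < t)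
    (hdiam : ∀ u v : C₁.supp, (G.induce C₁.supp).dist u v ≤ 3) :
    hullNumber (compPrism G) ≤ hullNumber (G.induce C₁.supp) + t :=
  hullNumber_compPrism_one_nontrivial_ub_diam_le_three_general G t C₁ hC₁ huniq ht ht0 hdiam
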